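/- For real u > 0 and v > 0 with u ≠ v, ∫_0^1 ∫_0^1 x^(u−1) y^(v−1)/(1 − xy) dx dy = (ψ(u) − ψ(v))/(u − v), where ψ is the digamma function. -/

import Mathlib

open Real Set Filter Topology MeasureTheory Finset

noncomputable section

private def dGam : ℝ → ℝ := Real.log ∘ Real.Gamma

private lemma hder_dGam {x : ℝ} (hx : 0 < x) : DifferentiableAt ℝ dGam x := by
  refine ((Real.differentiableAt_Gamma ?_).log (Real.Gamma_pos_of_pos hx).ne')
  exact fun m => by have := Nat.cast_nonneg (α := ℝ) m; intro h; linarith [h ▸ hx]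

private lemma deriv_dGam_eq {x : ℝ} (hx : 0 < x) :
    deriv dGam x = deriv Real.Gamma x / Real.Gamma x := by
  rw [dGam, Function.comp_def, deriv.log
    (Real.differentiableAt_Gamma fun m => by
      have := Nat.cast_nonneg (α := ℝ) m; intro h; linarith [h ▸ hx])
    (Real.Gamma_pos_of_pos hx).ne']

private lemma dGam_rec {x : ℝ} (hx : 0 < x) : dGam (x + 1) = dGam x + Real.log x := by
  simp only [dGam, Function.comp_apply, Real.Gamma_add_one hx.ne',
    Real.log_mul hx.ne' (Real.Gamma_pos_of_pos hx).ne', add_comm]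

private lemma deriv_dGam_rec {x : ℝ} (hx : 0 < x) :
    deriv dGam (x + 1) = deriv dGam x + 1 / x := by
  rw [← deriv_comp_add_const, one_div, ← Real.deriv_log,
    ← deriv_add (hder_dGam hx) (Real.differentiableAt_log hx.ne')]
  apply Filter.EventuallyEq.deriv_eq
  filter_upwards [eventually_gt_nhds hx] using fun y hy => dGam_rec hy

private lemma deriv_dGam_nat {x : ℝ} (hx : 0 < x) (n : ℕ) :
    deriv dGam (x + n) = deriv dGam x + ∑ m ∈ Finset.range n, 1 / (x + m) := by
  induction n with
  | zero => simp
  | succ n ih =>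
    have h1 : x + (n + 1 : ℕ) = (x + n) + 1 := by push_cast; ring
    rw [h1, deriv_dGam_rec (by positivity), ih, Finset.sum_range_succ]
    ring

private lemma deriv_dGam_lb {x : ℝ} (hx : 0 < x) : Real.log x ≤ deriv dGam (x + 1) := by
  have hc : ConvexOn ℝ (Ioi 0) dGam := Real.convexOn_log_Gamma
  refine (le_of_eq ?_).trans <| hc.slope_le_deriv (mem_Ioi.mpr hx)
    (mem_Ioi.mpr (by linarith)) (by linarith) (hder_dGam (by linarith))
  rw [slope_def_field, show x + 1 - x = (1 : ℝ) by ring, div_one, dGam_rec hx,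
    add_sub_cancel_left]

private lemma deriv_dGam_ub {x : ℝ} (hx : 0 < x) : deriv dGam (x + 1) ≤ Real.log (x + 1) := by
  have hc : ConvexOn ℝ (Ioi 0) dGam := Real.convexOn_log_Gamma
  refine (hc.deriv_le_slope (mem_Ioi.mpr (by linarith : (0:ℝ) < x + 1))
    (mem_Ioi.mpr (by linarith : (0:ℝ) < x + 2)) (by linarith)
    (hder_dGam (by linarith))).trans (le_of_eq ?_)
  rw [slope_def_field, show x + 2 - (x + 1) = (1 : ℝ) by ring, div_one,
    show x + 2 = (x + 1) + 1 by ring, dGam_rec (by linarith), add_sub_cancel_left]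

private lemma log_add_sub_log_tendsto (c : ℝ) :
    Tendsto (fun n : ℕ => Real.log (c + n) - Real.log n) atTop (𝓝 0) := by
  have h1 : Tendsto (fun n : ℕ => 1 + c / n) atTop (𝓝 1) := by
    simpa using tendsto_const_nhds.add
      (Filter.Tendsto.div_atTop (tendsto_const_nhds (x := c)) tendsto_natCast_atTop_atTop)
  have h2 : Tendsto (fun n : ℕ => Real.log (1 + c / n)) atTop (𝓝 0) := by
    have := (Real.continuousAt_log one_ne_zero).tendsto.comp h1
    simpa [Function.comp_def] using this
  refine h2.congr' ?_
  filter_upwards [eventually_gt_atTop (max 1 (Nat.ceil (-c + 1)))] with n hn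
  have hn1 : (1 : ℝ) ≤ (n : ℝ) := by
    have : 1 ≤ n := le_of_lt (lt_of_le_of_lt (le_max_left _ _) hn)
    exact_mod_cast this
  have hcn : 0 < c + n := by
    have : (Nat.ceil (-c + 1) : ℝ) < n := by
      exact_mod_cast lt_of_le_of_lt (le_max_right _ _) hn
    have := (Nat.le_ceil (-c + 1)).trans this.le
    linarith
  have hnpos : (0 : ℝ) < n := by linarith
  rw [show 1 + c / n = (c + n) / n by field_simp; ring, Real.log_div hcn.ne' hnpos.ne']

private lemma deriv_dGam_diff_tendsto {u v : ℝ} (hu : 0 < u) (hv : 0 < v) :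
    Tendsto (fun n : ℕ => deriv dGam (u + n) - deriv dGam (v + n)) atTop (𝓝 0) := by
  have key : ∀ x : ℝ, 0 < x → ∀ n : ℕ, 1 ≤ n →
      Real.log (x - 1 + n) ≤ deriv dGam (x + n) ∧ deriv dGam (x + n) ≤ Real.log (x + n) := by
    intro x hx n hn
    have hy : 0 < x + n - 1 := by
      have : (1:ℝ) ≤ n := by exact_mod_cast hn
      linarith
    have hxn : x + (n:ℝ) = (x + n - 1) + 1 := by ring
    constructor
    · have := deriv_dGam_lb hy
      rw [← hxn] at this
      simpa [show x + (n:ℝ) - 1 = x - 1 + n by ring] using this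
    · have := deriv_dGam_ub hy
      rw [← hxn] at this
      exact this
  have hlb : Tendsto (fun n : ℕ => Real.log (u - 1 + n) - Real.log (v + n)) atTop (𝓝 0) := by
    have := (log_add_sub_log_tendsto (u - 1)).sub (log_add_sub_log_tendsto v)
    simp only [sub_zero] at this
    refine (this.congr (fun n => by ring)).mono_right (by simp)
  have hub : Tendsto (fun n : ℕ => Real.log (u + n) - Real.log (v - 1 + n)) atTop (𝓝 0) := by
    have := (log_add_sub_log_tendsto u).sub (log_add_sub_log_tendsto (v - 1))
    simp only [sub_zero] at this
    refine (this.congr (fun n => by ring)).mono_right (by simp)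
  refine tendsto_of_tendsto_of_tendsto_of_le_of_le' hlb hub ?_ ?_
  · filter_upwards [eventually_ge_atTop 1] with n hn
    have h1 := (key u hu n hn).1
    have h2 := (key v hv n hn).2
    linarith
  · filter_upwards [eventually_ge_atTop 1] with n hn
    have h1 := (key u hu n hn).2
    have h2 := (key v hv n hn).1
    linarith

private lemma summable_aux {u v : ℝ} (hu : 0 < u) (hv : 0 < v) :
    Summable (fun n : ℕ => 1 / ((u + n) * (v + n))) := by
  have hbase : Summable (fun n : ℕ => (1:ℝ) / ((n:ℝ) + 1) ^ 2) := by
    have h := (Real.summable_one_div_nat_pow (p := 2)).mpr one_lt_two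
    have := (summable_nat_add_iff (f := fun n : ℕ => (1:ℝ) / (n:ℝ) ^ 2) 1).mpr h
    refine this.congr fun n => by push_cast; ring_nf
  have hkey : ∀ (x : ℝ), 0 < x → ∀ n : ℕ, min x 1 * (n + 1) ≤ x + n := by
    intro x hx n
    rcases le_total x 1 with h | h
    · rw [min_eq_left h]
      have : x * n ≤ n := by
        have := Nat.cast_nonneg (α := ℝ) n
        nlinarith
      nlinarith
    · rw [min_eq_right h]
      linarith
  refine Summable.of_nonneg_of_le (fun n => by positivity)
    (fun n => ?_) (hbase.mul_left (1 / (min u 1 * min v 1)))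
  have hmu : 0 < min u 1 := lt_min hu one_pos
  have hmv : 0 < min v 1 := lt_min hv one_pos
  have hn1 : (0:ℝ) < (n:ℝ) + 1 := by positivity
  have h1 := hkey u hu n
  have h2 := hkey v hv n
  have hprod : min u 1 * min v 1 * ((n:ℝ) + 1) ^ 2 ≤ (u + n) * (v + n) := by
    have := mul_le_mul h1 h2 (by positivity) (by positivity)
    nlinarith
  rw [div_mul_div_comm, one_mul]
  exact div_le_div_of_nonneg_left one_pos.le (by positivity) hprod

private lemma tsum_eq_digamma_diff {u v : ℝ} (hu : 0 < u) (hv : 0 < v) (huv : u ≠ v) :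
    ∑' n : ℕ, 1 / ((u + n) * (v + n)) =
      (deriv Real.Gamma u / Real.Gamma u - deriv Real.Gamma v / Real.Gamma v) / (u - v) := by
  have hS := summable_aux hu hv
  have hS2 : Summable (fun n : ℕ => 1 / (v + n) - 1 / (u + n)) := by
    refine (hS.mul_left (u - v)).congr fun n => ?_
    have h1 : u + (n:ℝ) ≠ 0 := by positivity
    have h2 : v + (n:ℝ) ≠ 0 := by positivity
    rw [div_sub_div _ _ h2 h1, mul_one_div, div_eq_div_iff (by positivity) (by positivity)]
    ring
  have hps : ∀ n : ℕ, ∑ m ∈ Finset.range n, (1 / (v + m) - 1 / (u + m)) =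
      (deriv dGam u - deriv dGam v) + (deriv dGam (v + n) - deriv dGam (u + n)) := by
    intro n
    rw [Finset.sum_sub_distrib]
    have h1 := deriv_dGam_nat hv n
    have h2 := deriv_dGam_nat hu n
    linarith
  have hlim : Tendsto (fun n : ℕ => ∑ m ∈ Finset.range n, (1 / (v + m) - 1 / (u + m)))
      atTop (𝓝 (deriv dGam u - deriv dGam v)) := by
    have h0 := deriv_dGam_diff_tendsto hv hu
    have := tendsto_const_nhds (x := deriv dGam u - deriv dGam v) (f := atTop (α := ℕ)) |>.add h0
    rw [add_zero] at this
    exact this.congr fun n => (hps n).symm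
  have htsum : ∑' n : ℕ, (1 / (v + n) - 1 / (u + n)) = deriv dGam u - deriv dGam v :=
    tendsto_nhds_unique hS2.hasSum.tendsto_sum_nat hlim
  have heq : ∑' n : ℕ, (1 / (v + n) - 1 / (u + n)) = (u - v) * ∑' n : ℕ, 1 / ((u + n) * (v + n)) := by
    rw [← tsum_mul_left]
    refine tsum_congr fun n => ?_
    have h1 : u + (n:ℝ) ≠ 0 := by positivity
    have h2 : v + (n:ℝ) ≠ 0 := by positivity
    rw [div_sub_div _ _ h2 h1, mul_one_div, div_eq_div_iff (by positivity) (by positivity)]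
    ring
  rw [← deriv_dGam_eq hu, ← deriv_dGam_eq hv, ← htsum, heq, mul_comm, mul_div_assoc,
    div_self (sub_ne_zero.mpr huv), mul_one]

private lemma integrableOn_rpow_Ioo {p : ℝ} (hp : -1 < p) :
    IntegrableOn (fun y : ℝ => y ^ p) (Ioo (0:ℝ) 1) := by
  exact (intervalIntegral.intervalIntegrable_rpow' hp).1.mono_set Ioo_subset_Ioc_self

private lemma integral_rpow_Ioo {p : ℝ} (hp : -1 < p) :
    ∫ y in Ioo (0:ℝ) 1, y ^ p = 1 / (p + 1) := by
  rw [← MeasureTheory.integral_Ioc_eq_integral_Ioo,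
    ← intervalIntegral.integral_of_le zero_le_one,
    integral_rpow (Or.inl hp), Real.one_rpow, Real.zero_rpow (by linarith), sub_zero, one_div]

private lemma tsum_lintegral_ne_top {f : ℕ → ℝ → ℝ} {s : Set ℝ} (hs : MeasurableSet s)
    (hnn : ∀ n, ∀ y ∈ s, 0 ≤ f n y) (hint : ∀ n, IntegrableOn (f n) s)
    {c : ℕ → ℝ} (hc : ∀ n, ∫ y in s, f n y = c n) (hsum : Summable c) :
    ∑' n, ∫⁻ y in s, ‖f n y‖₊ ∂volume ≠ ⊤ := by
  have hae : ∀ n, ∀ᵐ y ∂(volume.restrict s), 0 ≤ f n y := fun n =>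
    (MeasureTheory.ae_restrict_iff' hs).mpr (Filter.Eventually.of_forall (hnn n))
  have h1 : ∀ n, ∫⁻ y in s, ‖f n y‖₊ ∂volume = ENNReal.ofReal (c n) := by
    intro n
    rw [MeasureTheory.lintegral_congr_ae ((hae n).mono fun y hy => by
        rw [← enorm_eq_nnnorm, Real.enorm_eq_ofReal hy]),
      ← MeasureTheory.ofReal_integral_eq_lintegral_ofReal (hint n) (hae n), hc n]
  have hcnn : ∀ n, 0 ≤ c n := fun n =>
    (hc n) ▸ MeasureTheory.setIntegral_nonneg hs (hnn n)
  rw [tsum_congr h1, ← ENNReal.ofReal_tsum_of_nonneg hcnn hsum]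
  exact ENNReal.ofReal_ne_top

private lemma inner_eq {u v : ℝ} (hv : 0 < v) {x : ℝ} (hx : x ∈ Ioo (0:ℝ) 1) :
    ∫ y in (0:ℝ)..1, x ^ (u - 1) * y ^ (v - 1) / (1 - x * y) =
      ∑' n : ℕ, x ^ (u - 1) * x ^ n * (1 / (v + n)) := by
  obtain ⟨hx0, hx1⟩ := hx
  set f : ℕ → ℝ → ℝ := fun n y => x ^ (u - 1) * x ^ n * y ^ (v - 1 + (n:ℝ)) with hf
  have hxu : 0 ≤ x ^ (u - 1) := Real.rpow_nonneg hx0.le _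
  rw [intervalIntegral.integral_of_le zero_le_one, MeasureTheory.integral_Ioc_eq_integral_Ioo]
  have hpt : ∀ y ∈ Ioo (0:ℝ) 1, x ^ (u - 1) * y ^ (v - 1) / (1 - x * y) = ∑' n, f n y := by
    intro y hy
    obtain ⟨hy0, hy1⟩ := hy
    have hxy0 : 0 ≤ x * y := by positivity
    have hxy1 : x * y < 1 := by nlinarith
    have hterm : ∀ n : ℕ, f n y = (x ^ (u - 1) * y ^ (v - 1)) * (x * y) ^ n := by
      intro n
      rw [hf]
      simp only
      rw [Real.rpow_add hy0, Real.rpow_natCast, mul_pow]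
      ring
    rw [tsum_congr hterm, tsum_mul_left, tsum_geometric_of_lt_one hxy0 hxy1, div_eq_mul_inv]
  rw [MeasureTheory.setIntegral_congr_fun measurableSet_Ioo hpt]
  have hmeas : ∀ n : ℕ, AEStronglyMeasurable (f n) (volume.restrict (Ioo (0:ℝ) 1)) := by
    intro n
    have : Measurable (f n) := by
      rw [hf]
      fun_prop
    exact this.aestronglyMeasurable
  have hint : ∀ n : ℕ, IntegrableOn (f n) (Ioo (0:ℝ) 1) := by
    intro n
    exact (integrableOn_rpow_Ioo (by push_cast; linarith [Nat.cast_nonneg (α := ℝ) n]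
      : (-1:ℝ) < v - 1 + (n:ℝ))).const_mul _
  have hnn : ∀ n : ℕ, ∀ y ∈ Ioo (0:ℝ) 1, 0 ≤ f n y := by
    intro n y hy
    have := hy.1
    rw [hf]
    positivity
  have hc : ∀ n : ℕ, ∫ y in Ioo (0:ℝ) 1, f n y = x ^ (u - 1) * x ^ n * (1 / (v + n)) := by
    intro n
    rw [hf]
    simp only
    rw [MeasureTheory.integral_const_mul, integral_rpow_Ioo
      (by push_cast; linarith [Nat.cast_nonneg (α := ℝ) n]),
      show v - 1 + (n:ℝ) + 1 = v + n by ring]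
  have hsum : Summable (fun n : ℕ => x ^ (u - 1) * x ^ n * (1 / (v + n))) := by
    refine Summable.of_nonneg_of_le (fun n => by positivity) (fun n => ?_)
      (((summable_geometric_of_lt_one hx0.le hx1).mul_left (x ^ (u - 1) * (1 / v))).congr
        fun n => rfl)
    have h1 : 1 / (v + (n:ℝ)) ≤ 1 / v :=
      one_div_le_one_div_of_le hv (by linarith [Nat.cast_nonneg (α := ℝ) n])
    have h2 : 0 ≤ x ^ (u - 1) * x ^ n := by positivity
    calc x ^ (u - 1) * x ^ n * (1 / (v + n)) ≤ x ^ (u - 1) * x ^ n * (1 / v) :=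
          mul_le_mul_of_nonneg_left h1 h2
      _ = x ^ (u - 1) * (1 / v) * x ^ n := by ring
  rw [MeasureTheory.integral_tsum hmeas
    (tsum_lintegral_ne_top measurableSet_Ioo hnn hint hc hsum)]
  exact tsum_congr hc

theorem double_integral_digamma_diff (u v : ℝ) (hu : 0 < u) (hv : 0 < v) (huv : u ≠ v) :
    (∫ x in (0:ℝ)..1, ∫ y in (0:ℝ)..1, x ^ (u - 1) * y ^ (v - 1) / (1 - x * y)) =
      (deriv Real.Gamma u / Real.Gamma u - deriv Real.Gamma v / Real.Gamma v) / (u - v) := by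
  rw [intervalIntegral.integral_of_le zero_le_one, MeasureTheory.integral_Ioc_eq_integral_Ioo]
  set g : ℕ → ℝ → ℝ := fun n x => x ^ (u - 1 + (n:ℝ)) * (1 / (v + n)) with hg
  have hpt : ∀ x ∈ Ioo (0:ℝ) 1,
      (∫ y in (0:ℝ)..1, x ^ (u - 1) * y ^ (v - 1) / (1 - x * y)) = ∑' n : ℕ, g n x := by
    intro x hx
    rw [inner_eq hv hx]
    refine tsum_congr fun n => ?_
    rw [hg]
    simp only
    rw [← Real.rpow_natCast x n, ← Real.rpow_add hx.1]
  rw [MeasureTheory.setIntegral_congr_fun measurableSet_Ioo hpt]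
  have hmeas : ∀ n : ℕ, AEStronglyMeasurable (g n) (volume.restrict (Ioo (0:ℝ) 1)) := by
    intro n
    have : Measurable (g n) := by
      rw [hg]
      fun_prop
    exact this.aestronglyMeasurable
  have hexp : ∀ n : ℕ, (-1:ℝ) < u - 1 + (n:ℝ) := fun n => by
    linarith [Nat.cast_nonneg (α := ℝ) n]
  have hint : ∀ n : ℕ, IntegrableOn (g n) (Ioo (0:ℝ) 1) := fun n =>
    (integrableOn_rpow_Ioo (hexp n)).mul_const _
  have hnn : ∀ n : ℕ, ∀ x ∈ Ioo (0:ℝ) 1, 0 ≤ g n x := by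
    intro n x hx
    have h0 := hx.1
    have h1 : (0:ℝ) < v + n := by linarith [Nat.cast_nonneg (α := ℝ) n]
    rw [hg]
    positivity
  have hc : ∀ n : ℕ, ∫ x in Ioo (0:ℝ) 1, g n x = 1 / ((u + n) * (v + n)) := by
    intro n
    rw [hg]
    simp only
    rw [MeasureTheory.integral_mul_const, integral_rpow_Ioo (hexp n),
      show u - 1 + (n:ℝ) + 1 = u + n by ring, div_mul_div_comm, one_mul]
  have hsum : Summable (fun n : ℕ => 1 / ((u + n) * (v + n))) := summable_aux hu hv
  rw [MeasureTheory.integral_tsum hmeas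
    (tsum_lintegral_ne_top measurableSet_Ioo hnn hint hc hsum), tsum_congr hc,
    tsum_eq_digamma_diff hu hv huv]
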